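/- arXiv:math/0507334 — 5 statements merged into one kernel-verified Lean document; each statement's English description precedes it below -/
import Mathlib

section
/- Let C be a coalgebra in an abelian monoidal category M with left exact tensor functors, let L be a C-bicomodule, and let f : C → L be a morphism of C-bicomodules (where C is a bicomodule over itself via its comultiplication). Then the kernel D = Ker(f) carries a natural coalgebra structure such that the kernel inclusion δ : D → C is a morphism of coalgebras. -/
open CategoryTheory CategoryTheory.Limits MonoidalCategory

universe v u

variable {M : Type u} [Category.{v} M] [MonoidalCategory M] [Abelian M]

/-- A bicomodule over a comonoid `C` in a monoidal category. -/
structure Bicomod (C : Comon M) where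
  L : M
  ρl : L ⟶ C.X ⊗ L
  ρr : L ⟶ L ⊗ C.X
  ρl_counit : ρl ≫ (C.comon.counit ▷ L) = (λ_ L).inv
  ρr_counit : ρr ≫ (L ◁ C.comon.counit) = (ρ_ L).inv
  ρl_coassoc : ρl ≫ (C.comon.comul ▷ L) = ρl ≫ (C.X ◁ ρl) ≫ (α_ C.X C.X L).inv
  ρr_coassoc : ρr ≫ (ρr ▷ C.X) = ρr ≫ (L ◁ C.comon.comul) ≫ (α_ L C.X C.X).inv
  bicomod : ρr ≫ (ρl ▷ C.X) ≫ (α_ C.X L C.X).hom = ρl ≫ (C.X ◁ ρr)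

/-!
Write `δ : D ⟶ C` for the kernel of `f`. As `f` is a bicomodule map,
`δ ≫ Δ ≫ (f ▷ C) = δ ≫ f ≫ ρr = 0`, and likewise `δ ≫ Δ ≫ (C ◁ f) = 0`. The tensor functors
being left exact, `δ ⊗ δ` is a joint kernel of `f ▷ C` and `C ◁ f`, so `δ ≫ Δ` lifts to
`Δ_D : D ⟶ D ⊗ D`. Tensor products of monomorphisms are monomorphisms, so the coalgebra axioms
for `D` follow from those for `C` after composing with `δ ⊗ δ ⊗ δ`, `𝟙 ◁ δ` and `δ ▷ 𝟙`.
-/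

namespace CategoryTheory

variable {V : Type*} [Category V] [MonoidalCategory V]

instance mono_whiskerRight_of_preservesMonomorphisms {A B : V} (f : A ⟶ B) [Mono f] (X : V)
    [(tensorRight X).PreservesMonomorphisms] : Mono (f ▷ X) :=
  (tensorRight X).map_mono f

instance mono_whiskerLeft_of_preservesMonomorphisms (X : V) {A B : V} (f : A ⟶ B) [Mono f]
    [(tensorLeft X).PreservesMonomorphisms] : Mono (X ◁ f) :=
  (tensorLeft X).map_mono f

instance mono_tensorHom_of_preservesMonomorphisms {A B A' B' : V} (f : A ⟶ B) (g : A' ⟶ B')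
    [Mono f] [Mono g] [(tensorRight A').PreservesMonomorphisms]
    [(tensorLeft B).PreservesMonomorphisms] : Mono (f ⊗ₘ g) := by
  rw [MonoidalCategory.tensorHom_def]
  infer_instance

namespace Comon

variable {C : Comon V} {D : V} {δ : D ⟶ C.X} {Δ : D ⟶ D ⊗ D}

theorem comul_assoc_of_lift [Mono (δ ⊗ₘ δ ⊗ₘ δ)] (hΔ : Δ ≫ (δ ⊗ₘ δ) = δ ≫ C.comon.comul) :
    Δ ≫ Δ ▷ D ≫ (α_ D D D).hom = Δ ≫ D ◁ Δ := by
  rw [← cancel_mono (δ ⊗ₘ δ ⊗ₘ δ)]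
  calc (Δ ≫ Δ ▷ D ≫ (α_ D D D).hom) ≫ (δ ⊗ₘ δ ⊗ₘ δ)
      = Δ ≫ (δ ⊗ₘ δ) ≫ C.comon.comul ▷ C.X ≫ (α_ _ _ _).hom := by
        rw [Category.assoc, Category.assoc, ← associator_naturality,
          whiskerRight_comp_tensorHom_assoc, hΔ, tensorHom_comp_whiskerRight_assoc]
    _ = δ ≫ C.comon.comul ≫ C.X ◁ C.comon.comul := by
        rw [reassoc_of% hΔ, ComonObj.comul_assoc]
    _ = (Δ ≫ D ◁ Δ) ≫ (δ ⊗ₘ δ ⊗ₘ δ) := by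
        rw [Category.assoc, whiskerLeft_comp_tensorHom, hΔ, ← tensorHom_comp_whiskerLeft,
          reassoc_of% hΔ]

theorem counit_comul_of_lift [Mono (𝟙_ V ◁ δ)] (hΔ : Δ ≫ (δ ⊗ₘ δ) = δ ≫ C.comon.comul) :
    Δ ≫ (δ ≫ C.comon.counit) ▷ D = (λ_ D).inv := by
  rw [← cancel_mono (𝟙_ V ◁ δ), ← leftUnitor_inv_naturality, ← ComonObj.counit_comul,
    ← reassoc_of% hΔ, MonoidalCategory.tensorHom_def'_assoc, ← comp_whiskerRight,
    whisker_exchange, Category.assoc]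

theorem comul_counit_of_lift [Mono (δ ▷ 𝟙_ V)] (hΔ : Δ ≫ (δ ⊗ₘ δ) = δ ≫ C.comon.comul) :
    Δ ≫ D ◁ (δ ≫ C.comon.counit) = (ρ_ D).inv := by
  rw [← cancel_mono (δ ▷ 𝟙_ V), ← rightUnitor_inv_naturality, ← ComonObj.comul_counit,
    ← reassoc_of% hΔ, MonoidalCategory.tensorHom_def_assoc, ← whiskerLeft_comp,
    ← whisker_exchange, Category.assoc]

end Comon

variable [HasZeroMorphisms V]

namespace Limits.kernel

theorem exists_lift_whiskerRight_ι {A B : V} (f : A ⟶ B) [HasKernel f] (X : V)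
    [(tensorRight X).PreservesZeroMorphisms] [PreservesLimit (parallelPair f 0) (tensorRight X)]
    {T : V} (u : T ⟶ A ⊗ X) (hu : u ≫ f ▷ X = 0) : ∃ v, v ≫ kernel.ι f ▷ X = u :=
  ⟨_, (KernelFork.IsLimit.lift' (isLimitOfHasKernelOfPreservesLimit (tensorRight X) f) u hu).2⟩

theorem exists_lift_whiskerLeft_ι (X : V) {A B : V} (f : A ⟶ B) [HasKernel f]
    [(tensorLeft X).PreservesZeroMorphisms] [PreservesLimit (parallelPair f 0) (tensorLeft X)]
    {T : V} (u : T ⟶ X ⊗ A) (hu : u ≫ X ◁ f = 0) : ∃ v, v ≫ X ◁ kernel.ι f = u :=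
  ⟨_, (KernelFork.IsLimit.lift' (isLimitOfHasKernelOfPreservesLimit (tensorLeft X) f) u hu).2⟩

theorem exists_lift_tensorHom_ι
    [∀ X : V, (tensorLeft X).PreservesZeroMorphisms] [∀ X : V, PreservesFiniteLimits (tensorLeft X)]
    [∀ X : V, (tensorRight X).PreservesZeroMorphisms]
    [∀ X : V, PreservesFiniteLimits (tensorRight X)]
    {A B A' B' : V} (f : A ⟶ B) (g : A' ⟶ B') [HasKernel f] [HasKernel g]
    {T : V} (u : T ⟶ A ⊗ A') (hf : u ≫ f ▷ A' = 0) (hg : u ≫ A ◁ g = 0) :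
    ∃ v, v ≫ (kernel.ι f ⊗ₘ kernel.ι g) = u := by
  obtain ⟨w, hw⟩ := exists_lift_whiskerRight_ι f A' u hf
  have hwg : w ≫ kernel f ◁ g = 0 := by
    rw [← cancel_mono (kernel.ι f ▷ B'), Category.assoc, whisker_exchange, reassoc_of% hw, hg,
      zero_comp]
  obtain ⟨v, hv⟩ := exists_lift_whiskerLeft_ι (kernel f) g w hwg
  exact ⟨v, by rw [MonoidalCategory.tensorHom_def', reassoc_of% hv, hw]⟩

end Limits.kernel

end CategoryTheory

/-- If `C` is a coalgebra in an abelian monoidal category with left exact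
tensor functors, `L` a `C`-bicomodule, and `f : C ⟶ L` a morphism of `C`-bicomodules
(with `C` a bicomodule over itself via its comultiplication), then the kernel of `f` carries
a natural coalgebra structure for which the kernel inclusion is a coalgebra morphism. -/
theorem stmt0
    [∀ X : M, PreservesFiniteLimits (tensorLeft X)]
    [∀ X : M, PreservesFiniteLimits (tensorRight X)]
    (C : Comon M) (L : Bicomod C) (f : C.X ⟶ L.L)
    (hl : f ≫ L.ρl = C.comon.comul ≫ (C.X ◁ f))
    (hr : f ≫ L.ρr = C.comon.comul ≫ (f ▷ C.X)) :
    ∃ (Δ : kernel f ⟶ kernel f ⊗ kernel f) (ε : kernel f ⟶ 𝟙_ M),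
      Δ ≫ (Δ ▷ kernel f) ≫ (α_ (kernel f) (kernel f) (kernel f)).hom
          = Δ ≫ (kernel f ◁ Δ) ∧
      Δ ≫ (ε ▷ kernel f) = (λ_ (kernel f)).inv ∧
      Δ ≫ (kernel f ◁ ε) = (ρ_ (kernel f)).inv ∧
      kernel.ι f ≫ C.comon.comul = Δ ≫ (kernel.ι f ⊗ₘ kernel.ι f) ∧
      kernel.ι f ≫ C.comon.counit = ε := by
  have hr' : (kernel.ι f ≫ C.comon.comul) ≫ f ▷ C.X = 0 := by
    rw [Category.assoc, ← hr, kernel.condition_assoc, zero_comp]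
  have hl' : (kernel.ι f ≫ C.comon.comul) ≫ C.X ◁ f = 0 := by
    rw [Category.assoc, ← hl, kernel.condition_assoc, zero_comp]
  obtain ⟨Δ, hΔ⟩ := kernel.exists_lift_tensorHom_ι f f _ hr' hl'
  exact ⟨Δ, kernel.ι f ≫ C.comon.counit, Comon.comul_assoc_of_lift hΔ,
    Comon.counit_comul_of_lift hΔ, Comon.comul_counit_of_lift hΔ, hΔ.symm, rfl⟩
end

section
/- Let M be a monoidal category with direct limits indexed by ℕ. If ((X_i), (ξ_i^j)) is a direct system in M where each X_i is a coalgebra and each transition map ξ_i^j : X_i → X_j is a coalgebra homomorphism, then the colimit X = colim X_i carries a unique coalgebra structure (Δ, ε) such that each structural morphism ξ_i : X_i → X is a coalgebra homomorphism, and with this structure X is the colimit of the direct system in the category of coalgebras in M. -/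
/-!
The colimit injections `ξ_i` are jointly epimorphic, so a morphism out of the colimit is
determined by its composites with the `ξ_i`. The comultiplication and counit are the morphisms
induced by the compatible families `(ξ_i ⊗ ξ_i) ∘ Δ_i` and `ε_i`. Precomposed with `ξ_i`, each
coalgebra axiom for the colimit becomes the same axiom for `X_i` (because `ξ_i` is a
homomorphism), hence holds; likewise the morphism induced into a coalgebra `C` by a compatible
family of homomorphisms is a homomorphism.
-/
open CategoryTheory CategoryTheory.Limits MonoidalCategory

universe v u

variable {M : Type u} [Category.{v} M] [MonoidalCategory M]

section Transfer

variable {A B : M} (f : A ⟶ B) {ΔA : A ⟶ A ⊗ A} {ΔB : B ⟶ B ⊗ B}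

lemma comp_comul_whiskerRight_of_comul_comm (hΔ : f ≫ ΔB = ΔA ≫ (f ⊗ₘ f)) :
    f ≫ ΔB ≫ (ΔB ▷ B) = ΔA ≫ (ΔA ▷ A) ≫ ((f ⊗ₘ f) ⊗ₘ f) := by
  rw [reassoc_of% hΔ, ← tensorHom_id, tensorHom_comp_tensorHom, hΔ, ← tensorHom_id,
    tensorHom_comp_tensorHom]
  simp

lemma comp_comul_whiskerLeft_of_comul_comm (hΔ : f ≫ ΔB = ΔA ≫ (f ⊗ₘ f)) :
    f ≫ ΔB ≫ (B ◁ ΔB) = ΔA ≫ (A ◁ ΔA) ≫ (f ⊗ₘ (f ⊗ₘ f)) := by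
  rw [reassoc_of% hΔ, ← id_tensorHom, tensorHom_comp_tensorHom, hΔ, ← id_tensorHom,
    tensorHom_comp_tensorHom]
  simp

lemma comp_comul_assoc_of_comul_comm (hΔ : f ≫ ΔB = ΔA ≫ (f ⊗ₘ f))
    (hA : ΔA ≫ (ΔA ▷ A) ≫ (α_ _ _ _).hom = ΔA ≫ (A ◁ ΔA)) :
    f ≫ ΔB ≫ (ΔB ▷ B) ≫ (α_ _ _ _).hom = f ≫ ΔB ≫ (B ◁ ΔB) := by
  rw [reassoc_of% comp_comul_whiskerRight_of_comul_comm f hΔ,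
    comp_comul_whiskerLeft_of_comul_comm f hΔ, associator_naturality, reassoc_of% hA]

variable {εA : A ⟶ 𝟙_ M} {εB : B ⟶ 𝟙_ M}

lemma comp_counit_comul_of_comm (hΔ : f ≫ ΔB = ΔA ≫ (f ⊗ₘ f))
    (hε : f ≫ εB = εA) (hA : ΔA ≫ (εA ▷ A) = (λ_ A).inv) :
    f ≫ ΔB ≫ (εB ▷ B) = f ≫ (λ_ B).inv := by
  rw [reassoc_of% hΔ, ← tensorHom_id, tensorHom_comp_tensorHom, hε, Category.comp_id,
    MonoidalCategory.tensorHom_def, reassoc_of% hA, leftUnitor_inv_naturality]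

lemma comp_comul_counit_of_comm (hΔ : f ≫ ΔB = ΔA ≫ (f ⊗ₘ f))
    (hε : f ≫ εB = εA) (hA : ΔA ≫ (A ◁ εA) = (ρ_ A).inv) :
    f ≫ ΔB ≫ (B ◁ εB) = f ≫ (ρ_ B).inv := by
  rw [reassoc_of% hΔ, ← id_tensorHom, tensorHom_comp_tensorHom, hε, Category.comp_id,
    tensorHom_def', reassoc_of% hA, rightUnitor_inv_naturality]

end Transfer

section Colimit

variable {J : Type*} [Category J] {X : J ⥤ M}

lemma map_comp_comul_comp_tensorHom_ι (c : Cocone X) {Δ : ∀ j, X.obj j ⟶ X.obj j ⊗ X.obj j}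
    (htΔ : ∀ {i j : J} (h : i ⟶ j), X.map h ≫ Δ j = Δ i ≫ (X.map h ⊗ₘ X.map h))
    {i j : J} (h : i ⟶ j) :
    X.map h ≫ Δ j ≫ (c.ι.app j ⊗ₘ c.ι.app j) = Δ i ≫ (c.ι.app i ⊗ₘ c.ι.app i) := by
  rw [reassoc_of% htΔ h, tensorHom_comp_tensorHom, c.w]

variable [HasColimit X] {C : M} (f : ∀ j, X.obj j ⟶ C)
  (hf : ∀ {i j : J} (h : i ⟶ j), X.map h ≫ f j = f i)

omit [MonoidalCategory M] in
noncomputable def colimit.descCompatible : colimit X ⟶ C :=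
  colimit.desc X { pt := C, ι := { app := f, naturality := fun i j h => by simp [hf h] } }

omit [MonoidalCategory M] in
lemma colimit.ι_descCompatible (j : J) : colimit.ι X j ≫ colimit.descCompatible f hf = f j :=
  colimit.ι_desc _ _

end Colimit

/-- If `((X_i), (ξ_i^j))` is an ℕ-indexed direct system of coalgebras in a
monoidal category `M` with coalgebra homomorphisms as transition maps, then the colimit
carries a unique coalgebra structure making the structural morphisms coalgebra homomorphisms,
and with this structure it is the colimit in the category of coalgebras in `M`. -/
theorem stmt1 (X : ℕ ⥤ M) [HasColimit X]
    (Δ : ∀ i : ℕ, X.obj i ⟶ X.obj i ⊗ X.obj i) (ε : ∀ i : ℕ, X.obj i ⟶ 𝟙_ M)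
    (hco : ∀ i, Δ i ≫ (Δ i ▷ X.obj i) ≫ (α_ _ _ _).hom = Δ i ≫ (X.obj i ◁ Δ i))
    (hl : ∀ i, Δ i ≫ (ε i ▷ X.obj i) = (λ_ (X.obj i)).inv)
    (hr : ∀ i, Δ i ≫ (X.obj i ◁ ε i) = (ρ_ (X.obj i)).inv)
    (htΔ : ∀ {i j : ℕ} (h : i ⟶ j), X.map h ≫ Δ j = Δ i ≫ (X.map h ⊗ₘ X.map h))
    (htε : ∀ {i j : ℕ} (h : i ⟶ j), X.map h ≫ ε j = ε i) :
    -- existence and uniqueness of the coalgebra structure on the colimit making the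
    -- structural morphisms coalgebra homomorphisms
    (∃! DE : (colimit X ⟶ colimit X ⊗ colimit X) × (colimit X ⟶ 𝟙_ M),
      ∀ i : ℕ, colimit.ι X i ≫ DE.1 = Δ i ≫ (colimit.ι X i ⊗ₘ colimit.ι X i) ∧
        colimit.ι X i ≫ DE.2 = ε i) ∧
    -- this structure is a coalgebra structure and makes the colimit the colimit of the
    -- direct system in the category of coalgebras in `M`
    (∀ (Δc : colimit X ⟶ colimit X ⊗ colimit X) (εc : colimit X ⟶ 𝟙_ M),
      (∀ i : ℕ, colimit.ι X i ≫ Δc = Δ i ≫ (colimit.ι X i ⊗ₘ colimit.ι X i)) →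
      (∀ i : ℕ, colimit.ι X i ≫ εc = ε i) →
      (Δc ≫ (Δc ▷ colimit X) ≫ (α_ _ _ _).hom = Δc ≫ (colimit X ◁ Δc)) ∧
      (Δc ≫ (εc ▷ colimit X) = (λ_ (colimit X)).inv) ∧
      (Δc ≫ (colimit X ◁ εc) = (ρ_ (colimit X)).inv) ∧
      ∀ (C : M) (ΔC : C ⟶ C ⊗ C) (εC : C ⟶ 𝟙_ M),
        (ΔC ≫ (ΔC ▷ C) ≫ (α_ _ _ _).hom = ΔC ≫ (C ◁ ΔC)) →
        (ΔC ≫ (εC ▷ C) = (λ_ C).inv) → (ΔC ≫ (C ◁ εC) = (ρ_ C).inv) →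
        ∀ f : ∀ i : ℕ, X.obj i ⟶ C,
          (∀ i, f i ≫ ΔC = Δ i ≫ (f i ⊗ₘ f i)) → (∀ i, f i ≫ εC = ε i) →
          (∀ {i j : ℕ} (h : i ⟶ j), X.map h ≫ f j = f i) →
          ∃! g : colimit X ⟶ C,
            (g ≫ ΔC = Δc ≫ (g ⊗ₘ g) ∧ g ≫ εC = εc) ∧
            ∀ i, colimit.ι X i ≫ g = f i) := by
  have hΔι := colimit.ι_descCompatible (fun i => Δ i ≫ (colimit.ι X i ⊗ₘ colimit.ι X i))
    (map_comp_comul_comp_tensorHom_ι (colimit.cocone X) htΔ)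
  have hει := colimit.ι_descCompatible _ htε
  refine ⟨⟨(_, _), fun i => ⟨hΔι i, hει i⟩, ?_⟩, ?_⟩
  · rintro ⟨Δc, εc⟩ h
    exact Prod.ext (colimit.hom_ext fun i => (h i).1.trans (hΔι i).symm)
      (colimit.hom_ext fun i => (h i).2.trans (hει i).symm)
  intro Δc εc hΔc hεc
  refine ⟨colimit.hom_ext fun i => comp_comul_assoc_of_comul_comm _ (hΔc i) (hco i),
    colimit.hom_ext fun i => comp_counit_comul_of_comm _ (hΔc i) (hεc i) (hl i),
    colimit.hom_ext fun i => comp_comul_counit_of_comm _ (hΔc i) (hεc i) (hr i), ?_⟩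
  intro C ΔC εC _ _ _ f hfΔ hfε hfnat
  have hι := colimit.ι_descCompatible f hfnat
  refine ⟨colimit.descCompatible f hfnat, ⟨⟨?_, ?_⟩, hι⟩, ?_⟩
  · exact colimit.hom_ext fun i => by
      rw [reassoc_of% hι, hfΔ, reassoc_of% hΔc, tensorHom_comp_tensorHom, hι]
  · exact colimit.hom_ext fun i => by rw [reassoc_of% hι, hfε, hεc]
  · rintro g ⟨-, hg⟩
    exact colimit.hom_ext fun i => by rw [hg, hι]
end

section
/- Let δ : D → C be a monomorphism of coalgebras in an abelian monoidal category M with left exact tensor functors, let (L, p) be the cokernel of δ, and define D^{∧^n} = Ker(p^{⊗n} ∘ Δ_C^{n-1}) with inclusion δ_n : D^{∧^n} → C. Then for all i ≤ j there exists a unique morphism ξ_i^j : D^{∧^i} → D^{∧^j} with δ_j ∘ ξ_i^j = δ_i, each ξ_i^j is a coalgebra homomorphism, and ((D^{∧^i}), (ξ_i^j)) forms a direct system in M. -/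
/-!
Since `δ` is a coalgebra map and `p ∘ δ = 0`, the comultiplication of `C` descends to
`q : L ⟶ L ⊗ L` with `p ≫ q = Δ ≫ (p ⊗ p)`. As `Δ^{n+1}` is `Δ^n` followed by comultiplying the
last tensor factor, `p^{⊗ (n+2)} ∘ Δ^{n+1}` factors through `p^{⊗ (n+1)} ∘ Δ^n` via `q` on the
last factor; so the kernels `D^{∧ n}` increase with `n`, and `ξ_i^j` is the induced map of
kernels. Uniqueness, the coalgebra property and the direct system laws then follow by cancelling
the monomorphisms `δ_j` and, by left exactness of the tensor product, `δ_j ⊗ δ_j`.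
-/

open CategoryTheory CategoryTheory.Limits MonoidalCategory

universe v u

variable {M : Type u} [Category.{v} M] [MonoidalCategory M]

/-- `pow X n = X^{⊗ (n+1)}`. -/
def pow (X : M) : ℕ → M
  | 0 => X
  | n + 1 => pow X n ⊗ X

/-- `powHom f n = f^{⊗ (n+1)}`. -/
def powHom {X Y : M} (f : X ⟶ Y) : ∀ n : ℕ, pow X n ⟶ pow Y n
  | 0 => f
  | n + 1 => powHom f n ⊗ₘ f

/-- The `n`-th iterated comultiplication `Δ_C^n : C ⟶ C^{⊗ (n+1)}` of a coalgebra. -/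
def itComul (C : Comon M) : ∀ n : ℕ, C.X ⟶ pow C.X n
  | 0 => 𝟙 C.X
  | n + 1 => ComonObj.comul (X := C.X) ≫ (itComul C n ▷ C.X)

variable [Abelian M]

/-- `D^{∧_C^{n+1}} = Ker(p^{⊗ (n+1)} ∘ Δ_C^n)`, where `p` is the cokernel projection of `δ`. -/
noncomputable abbrev wedgeObj {D C : Comon M} (δ : D ⟶ C) (n : ℕ) : M :=
  kernel (itComul C n ≫ powHom (cokernel.π δ.hom) n)

/-- the inclusion `δ_{n+1} : D^{∧_C^{n+1}} ⟶ C` -/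
noncomputable abbrev wedgeι {D C : Comon M} (δ : D ⟶ C) (n : ℕ) : wedgeObj δ n ⟶ C.X :=
  kernel.ι (itComul C n ≫ powHom (cokernel.π δ.hom) n)

open ComonObj

section

variable {V : Type*} [Category V] [MonoidalCategory V]

def lastMap {X : V} (c : X ⟶ X ⊗ X) : ∀ n : ℕ, pow X n ⟶ pow X (n + 1)
  | 0 => c
  | n + 1 => (pow X n ◁ c) ≫ (α_ (pow X n) X X).inv

theorem lastMap_comp_powHom {X Y : V} {f : X ⟶ Y} {c : X ⟶ X ⊗ X} {d : Y ⟶ Y ⊗ Y}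
    (h : c ≫ (f ⊗ₘ f) = f ≫ d) : ∀ n : ℕ,
    lastMap c n ≫ powHom f (n + 1) = powHom f n ≫ lastMap d n
  | 0 => h
  | n + 1 => by
    change ((pow X n ◁ c) ≫ (α_ _ _ _).inv) ≫ ((powHom f n ⊗ₘ f) ⊗ₘ f) =
      (powHom f n ⊗ₘ f) ≫ (pow Y n ◁ d) ≫ (α_ _ _ _).inv
    rw [Category.assoc, ← associator_inv_naturality, whiskerLeft_comp_tensorHom_assoc, h,
      tensorHom_comp_whiskerLeft_assoc]

theorem itComul_succ (C : Comon V) (n : ℕ) :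
    itComul C (n + 1) = itComul C n ≫ lastMap Δ[C.X] n := by
  cases n with
  | zero =>
    change Δ[C.X] ≫ 𝟙 C.X ▷ C.X = 𝟙 C.X ≫ Δ[C.X]
    simp
  | succ n =>
    change Δ[C.X] ≫ (Δ[C.X] ≫ itComul C n ▷ C.X) ▷ C.X =
      (Δ[C.X] ≫ itComul C n ▷ C.X) ≫ pow C.X n ◁ Δ[C.X] ≫ (α_ _ _ _).inv
    rw [comp_whiskerRight, comul_assoc_flip_assoc, ← associator_inv_naturality_left,
      whisker_exchange_assoc]
    simp only [Category.assoc]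

theorem mono_tensorHom [∀ X : V, (tensorLeft X).PreservesMonomorphisms]
    [∀ X : V, (tensorRight X).PreservesMonomorphisms]
    {X Y X' Y' : V} (f : X ⟶ Y) (g : X' ⟶ Y') [Mono f] [Mono g] : Mono (f ⊗ₘ g) := by
  have : Mono (f ▷ X') := (tensorRight X').map_mono f
  have : Mono (Y ◁ g) := (tensorLeft Y).map_mono g
  rw [MonoidalCategory.tensorHom_def]
  exact mono_comp _ _

end

section

variable [∀ X : M, (tensorLeft X).PreservesZeroMorphisms] {D C : Comon M} (δ : D ⟶ C)

theorem hom_comp_comul_comp_tensor_cokernel_π :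
    δ.hom ≫ Δ[C.X] ≫ (cokernel.π δ.hom ⊗ₘ cokernel.π δ.hom) = 0 := by
  have : D.X ◁ (0 : D.X ⟶ cokernel δ.hom) = 0 := (tensorLeft D.X).map_zero _ _
  rw [IsComonHom.hom_comul_assoc, tensorHom_comp_tensorHom, cokernel.condition, tensorHom_def',
    this, zero_comp, comp_zero]

noncomputable def cokernelComul : cokernel δ.hom ⟶ cokernel δ.hom ⊗ cokernel δ.hom :=
  cokernel.desc δ.hom _ (hom_comp_comul_comp_tensor_cokernel_π δ)

theorem cokernel_π_comp_cokernelComul :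
    cokernel.π δ.hom ≫ cokernelComul δ = Δ[C.X] ≫ (cokernel.π δ.hom ⊗ₘ cokernel.π δ.hom) :=
  cokernel.π_desc _ _ _

theorem itComul_succ_comp_powHom (n : ℕ) :
    itComul C (n + 1) ≫ powHom (cokernel.π δ.hom) (n + 1) =
      (itComul C n ≫ powHom (cokernel.π δ.hom) n) ≫ lastMap (cokernelComul δ) n := by
  rw [itComul_succ, Category.assoc, Category.assoc,
    lastMap_comp_powHom (cokernel_π_comp_cokernelComul δ).symm]

theorem wedgeι_comp_itComul_comp_powHom_eq_zero {i j : ℕ} (hij : i ≤ j) :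
    wedgeι δ i ≫ itComul C j ≫ powHom (cokernel.π δ.hom) j = 0 := by
  induction j, hij using Nat.le_induction with
  | base => exact kernel.condition _
  | succ j _ ih => rw [itComul_succ_comp_powHom, ← Category.assoc, ih, zero_comp]

end

/-- Let `δ : D → C` be a monomorphism of coalgebras in an abelian monoidal
category with left exact tensor functors.  Then for `i ≤ j` there is a unique morphism
`ξ_i^j : D^{∧ i} ⟶ D^{∧ j}` compatible with the kernel inclusions into `C`; each such `ξ_i^j`
is a coalgebra homomorphism (with respect to the induced coalgebra structures on the wedge
powers, i.e. those making the inclusions coalgebra morphisms), and the `ξ_i^j` form a direct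
system. -/
theorem stmt2
    [∀ X : M, PreservesFiniteLimits (tensorLeft X)]
    [∀ X : M, PreservesFiniteLimits (tensorRight X)]
    (D C : Comon M) (δ : D ⟶ C) (hmono : Mono δ.hom) :
    -- existence and uniqueness of the transition morphisms
    (∀ i j : ℕ, i ≤ j →
      ∃! ξ : wedgeObj δ i ⟶ wedgeObj δ j, ξ ≫ wedgeι δ j = wedgeι δ i) ∧
    -- each transition morphism is a coalgebra homomorphism
    (∀ i j : ℕ, i ≤ j → ∀ ξ : wedgeObj δ i ⟶ wedgeObj δ j, ξ ≫ wedgeι δ j = wedgeι δ i →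
      ∀ (Δi : wedgeObj δ i ⟶ wedgeObj δ i ⊗ wedgeObj δ i) (εi : wedgeObj δ i ⟶ 𝟙_ M)
        (Δj : wedgeObj δ j ⟶ wedgeObj δ j ⊗ wedgeObj δ j) (εj : wedgeObj δ j ⟶ 𝟙_ M),
        wedgeι δ i ≫ ComonObj.comul (X := C.X) = Δi ≫ (wedgeι δ i ⊗ₘ wedgeι δ i) →
        wedgeι δ i ≫ ComonObj.counit (X := C.X) = εi →
        wedgeι δ j ≫ ComonObj.comul (X := C.X) = Δj ≫ (wedgeι δ j ⊗ₘ wedgeι δ j) →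
        wedgeι δ j ≫ ComonObj.counit (X := C.X) = εj →
        ξ ≫ Δj = Δi ≫ (ξ ⊗ₘ ξ) ∧ ξ ≫ εj = εi) ∧
    -- the transition morphisms form a direct system
    (∀ i j k : ℕ, i ≤ j → j ≤ k →
      ∀ (ξij : wedgeObj δ i ⟶ wedgeObj δ j) (ξjk : wedgeObj δ j ⟶ wedgeObj δ k)
        (ξik : wedgeObj δ i ⟶ wedgeObj δ k),
        ξij ≫ wedgeι δ j = wedgeι δ i → ξjk ≫ wedgeι δ k = wedgeι δ j →
        ξik ≫ wedgeι δ k = wedgeι δ i → ξij ≫ ξjk = ξik) := by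
  refine ⟨fun i j hij => ?_, fun i j _ ξ hξ Δi εi Δj εj hΔi hεi hΔj hεj => ⟨?_, ?_⟩,
    fun i j k _ _ ξij ξjk ξik hij hjk hik => ?_⟩
  · refine ⟨kernel.lift _ (wedgeι δ i) (wedgeι_comp_itComul_comp_powHom_eq_zero δ hij),
      kernel.lift_ι _ _ _, fun ξ hξ => ?_⟩
    rw [← cancel_mono (wedgeι δ j), hξ, kernel.lift_ι]
  · have := mono_tensorHom (wedgeι δ j) (wedgeι δ j)
    rw [← cancel_mono (wedgeι δ j ⊗ₘ wedgeι δ j), Category.assoc, ← hΔj, reassoc_of% hξ, hΔi,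
      Category.assoc, tensorHom_comp_tensorHom, hξ]
  · rw [← hεj, ← hεi, reassoc_of% hξ]
  · rw [← cancel_mono (wedgeι δ k), Category.assoc, hjk, hij, hik]
end

section
/- Let i ∈ {1,2} and let f_i : X_i → Y_i be morphisms in an abelian monoidal category M admitting sections σ_i : Y_i → X_i with f_i ∘ σ_i = Id_{Y_i}. Then Ker(f_1 ⊗ f_2) = (Ker(f_1) ⊗ X_2) + (X_1 ⊗ Ker(f_2)) as subobjects of X_1 ⊗ X_2. -/
/-!
With `e := 𝟙 - f₁ ≫ σ₁`, which factors through `Ker f₁`, every generalized element `k` of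
`Ker (f₁ ⊗ f₂)` splits as `k ≫ e ▷ X₂ + k ≫ (f₁ ≫ σ₁) ▷ X₂`. The first summand lies in
`Ker f₁ ⊗ X₂`. Composed with `X₁ ◁ f₂`, the second becomes `k ≫ (f₁ ⊗ f₂) ≫ σ₁ ▷ Y₂ = 0`, so
it lies in `Ker (X₁ ◁ f₂) = X₁ ⊗ Ker f₂` by left exactness of `X₁ ⊗ -`.
The reverse inclusion holds in any monoidal preadditive abelian category.
-/

open CategoryTheory CategoryTheory.Limits MonoidalCategory

universe v u

variable {M : Type u} [Category.{v} M] [MonoidalCategory M] [Abelian M]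

theorem monoidalPreadditive_of_additive {C : Type*} [Category C] [Preadditive C]
    [MonoidalCategory C] [∀ X : C, (tensorLeft X).Additive] [∀ X : C, (tensorRight X).Additive] :
    MonoidalPreadditive C where
  whiskerLeft_zero := (tensorLeft _).map_zero _ _
  zero_whiskerRight := (tensorRight _).map_zero _ _
  whiskerLeft_add f g := (tensorLeft _).map_add (f := f) (g := g)
  add_whiskerRight f g := (tensorRight _).map_add (f := f) (g := g)

theorem exists_comp_whiskerLeft_kernel_ι {C : Type*} [Category C] [MonoidalCategory C]
    [HasZeroMorphisms C] (X : C) {A B : C} (f : A ⟶ B) [HasKernel f] [HasKernel (X ◁ f)]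
    [(tensorLeft X).PreservesZeroMorphisms] [PreservesLimit (parallelPair f 0) (tensorLeft X)]
    {Z : C} (t : Z ⟶ X ⊗ A) (ht : t ≫ X ◁ f = 0) :
    ∃ l : Z ⟶ X ⊗ kernel f, l ≫ X ◁ kernel.ι f = t :=
  ⟨kernel.lift (X ◁ f) t ht ≫ (PreservesKernel.iso (tensorLeft X) f).inv, by
    rw [Category.assoc]
    exact (congrArg _ (PreservesKernel.iso_inv_ι (tensorLeft X) f)).trans (kernel.lift_ι _ t ht)⟩

theorem imageSubobject_biprod_desc_le_kernelSubobject_tensorHom [MonoidalPreadditive M]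
    {X₁ X₂ Y₁ Y₂ : M} (f₁ : X₁ ⟶ Y₁) (f₂ : X₂ ⟶ Y₂) :
    imageSubobject (biprod.desc (kernel.ι f₁ ▷ X₂) (X₁ ◁ kernel.ι f₂))
      ≤ kernelSubobject (f₁ ⊗ₘ f₂) := by
  have hw : biprod.desc (kernel.ι f₁ ▷ X₂) (X₁ ◁ kernel.ι f₂) ≫ (f₁ ⊗ₘ f₂) = 0 := by
    apply biprod.hom_ext'
    · simp [MonoidalCategory.tensorHom_def, ← comp_whiskerRight_assoc]
    · simp [tensorHom_def', ← whiskerLeft_comp_assoc]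
  exact imageSubobject_le _ (factorThruKernelSubobject _ _ hw) (by simp)

theorem kernelSubobject_tensorHom_le_of_comp_eq_id [MonoidalPreadditive M]
    {X₁ X₂ Y₁ Y₂ : M} (f₁ : X₁ ⟶ Y₁) (f₂ : X₂ ⟶ Y₂)
    [PreservesLimit (parallelPair f₂ 0) (tensorLeft X₁)] (σ₁ : Y₁ ⟶ X₁) (h₁ : σ₁ ≫ f₁ = 𝟙 Y₁) :
    kernelSubobject (f₁ ⊗ₘ f₂)
      ≤ imageSubobject (biprod.desc (kernel.ι f₁ ▷ X₂) (X₁ ◁ kernel.ι f₂)) := by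
  set k := (kernelSubobject (f₁ ⊗ₘ f₂)).arrow
  let q₁ : X₁ ⟶ kernel f₁ := kernel.lift f₁ (𝟙 X₁ - f₁ ≫ σ₁) (by simp [h₁])
  have hkill : (k ≫ (f₁ ≫ σ₁) ▷ X₂) ≫ X₁ ◁ f₂ = 0 := by
    calc _ = (k ≫ (f₁ ⊗ₘ f₂)) ≫ σ₁ ▷ Y₂ := by simp [tensorHom_def', whisker_exchange]
      _ = 0 := by rw [kernelSubobject_arrow_comp, zero_comp]
  obtain ⟨l₂, hl₂⟩ := exists_comp_whiskerLeft_kernel_ι X₁ f₂ _ hkill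
  refine Subobject.le_of_comm (biprod.lift (k ≫ q₁ ▷ X₂) l₂ ≫ factorThruImageSubobject _) ?_
  calc _ = k ≫ (𝟙 X₁ - f₁ ≫ σ₁) ▷ X₂ + k ≫ (f₁ ≫ σ₁) ▷ X₂ := by
          simp [q₁, hl₂, ← comp_whiskerRight]
    _ = k := by rw [← Preadditive.comp_add, ← MonoidalPreadditive.add_whiskerRight, sub_add_cancel,
          id_whiskerRight, Category.comp_id]

/-- Let `f_i : X_i ⟶ Y_i` (`i = 1, 2`) be morphisms in an abelian monoidal
category with left exact tensor functors, admitting sections `σ_i` with `f_i ∘ σ_i = Id`.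
Then `Ker(f₁ ⊗ f₂) = (Ker f₁ ⊗ X₂) + (X₁ ⊗ Ker f₂)` as subobjects of `X₁ ⊗ X₂`, where the
sum of the two subobjects is the image of the induced map from their coproduct. -/
theorem stmt7
    [∀ X : M, PreservesFiniteLimits (tensorLeft X)]
    [∀ X : M, PreservesFiniteLimits (tensorRight X)]
    {X₁ X₂ Y₁ Y₂ : M} (f₁ : X₁ ⟶ Y₁) (f₂ : X₂ ⟶ Y₂)
    (σ₁ : Y₁ ⟶ X₁) (σ₂ : Y₂ ⟶ X₂)
    (h₁ : σ₁ ≫ f₁ = 𝟙 Y₁) (h₂ : σ₂ ≫ f₂ = 𝟙 Y₂) :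
    kernelSubobject (f₁ ⊗ₘ f₂)
      = imageSubobject (biprod.desc (kernel.ι f₁ ▷ X₂) (X₁ ◁ kernel.ι f₂)) := by
  have (X : M) : (tensorLeft X).Additive := Functor.additive_of_preserves_binary_products _
  have (X : M) : (tensorRight X).Additive := Functor.additive_of_preserves_binary_products _
  have : MonoidalPreadditive M := monoidalPreadditive_of_additive
  exact le_antisymm (kernelSubobject_tensorHom_le_of_comp_eq_id f₁ f₂ σ₁ h₁)
    (imageSubobject_biprod_desc_le_kernelSubobject_tensorHom f₁ f₂)
end

section
/- Let C be a coalgebra in a cocomplete abelian monoidal category M with left exact tensor functors, M a C-bicomodule, and T = T_C^c(M) the cotensor coalgebra. If E is a coalgebra and α, β : E → T are coalgebra homomorphisms with p_1 ∘ α = p_1 ∘ β, then p_n ∘ α = p_n ∘ β for every n ≥ 1. -/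
/-! Since `(p_r ⊗ p_s) ∘ Δ_T = D r s ∘ p_{r+s}` and coalgebra maps intertwine comultiplications,
`D 1 n ∘ p_{1+n} ∘ α = (p_1 α ⊗ p_n α) ∘ Δ_E`; as `D 1 n` is monic, `p_{n+1} ∘ α` is determined by
`p_1 ∘ α` and `p_n ∘ α`, and induction on `n` gives the claim. -/

open CategoryTheory CategoryTheory.Limits MonoidalCategory

universe v u

variable {M : Type u} [Category.{v} M] [MonoidalCategory M] [Abelian M]
  [MonoidalPreadditive M] [HasColimits M]

/-- Projection `p_n : ⊕_m P_m ⟶ P_n` of the coproduct in a preadditive category. -/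
noncomputable def πT (P : ℕ → M) (n : ℕ) : (∐ P) ⟶ P n :=
  Sigma.desc fun m => if h : m = n then eqToHom (congrArg P h) else 0

/-- Truncated deconcatenation morphism `P t ⟶ P r ⊗ P (t-r)` (zero when `r > t`),
where `D r s : M^{□(r+s)} ⟶ M^{□r} ⊗ M^{□s}` are the deconcatenation morphisms of the
cotensor powers (`P 0 = C`, `P n = M^{□n}`). -/
noncomputable def dron (P : ℕ → M) (D : ∀ r s : ℕ, P (r + s) ⟶ P r ⊗ P s) (t r : ℕ) :
    P t ⟶ P r ⊗ P (t - r) :=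
  if h : r ≤ t then eqToHom (congrArg P (by omega : t = r + (t - r))) ≫ D r (t - r)
  else 0

lemma comul_comp_πT_tensor_πT (P : ℕ → M) (D : ∀ r s : ℕ, P (r + s) ⟶ P r ⊗ P s)
    (ΔT : (∐ P) ⟶ (∐ P) ⊗ (∐ P))
    (hΔ : ∀ t : ℕ, Sigma.ι P t ≫ ΔT =
      ∑ r ∈ Finset.range (t + 1), dron P D t r ≫ (Sigma.ι P r ⊗ₘ Sigma.ι P (t - r)))
    (r s : ℕ) :
    ΔT ≫ (πT P r ⊗ₘ πT P s) = πT P (r + s) ≫ D r s := by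
  refine Sigma.hom_ext _ _ fun t => ?_
  rw [← Category.assoc, hΔ t, Preadditive.sum_comp]
  simp only [Category.assoc, tensorHom_comp_tensorHom, πT, Sigma.ι_desc]
  by_cases ht : t = r + s
  · subst ht
    rw [Finset.sum_eq_single r]
    · simp [dron]
    · intro q _ hq
      simp [hq]
    · intro h; exact absurd (Finset.mem_range.mpr (by omega)) h
  · refine (Finset.sum_eq_zero fun q hmem => ?_).trans (by simp [ht])
    by_cases hq : q = r
    · have : t - q ≠ s := by simp at hmem; omega
      simp [this]
    · simp [hq]

lemma comp_πT_comp_deconcat_of_comp_comul {X : M} (P : ℕ → M)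
    (D : ∀ r s : ℕ, P (r + s) ⟶ P r ⊗ P s) (ΔT : (∐ P) ⟶ (∐ P) ⊗ (∐ P))
    (hΔ : ∀ t : ℕ, Sigma.ι P t ≫ ΔT =
      ∑ r ∈ Finset.range (t + 1), dron P D t r ≫ (Sigma.ι P r ⊗ₘ Sigma.ι P (t - r)))
    (δ : X ⟶ X ⊗ X) (f : X ⟶ ∐ P) (hf : f ≫ ΔT = δ ≫ (f ⊗ₘ f)) (r s : ℕ) :
    f ≫ πT P (r + s) ≫ D r s = δ ≫ ((f ≫ πT P r) ⊗ₘ (f ≫ πT P s)) := by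
  rw [← comul_comp_πT_tensor_πT P D ΔT hΔ, ← Category.assoc, hf, Category.assoc,
    tensorHom_comp_tensorHom]

/-- Let `T = T_C^c(M) = ⊕_n M^{□n}` be the cotensor coalgebra of a
`C`-bicomodule `M` in a cocomplete abelian monoidal category with left exact tensor
functors (so that the morphisms `χ_M □ M^{□(n-1)} = D 1 n` are monomorphisms).  If `E` is a
coalgebra and `α, β : E ⟶ T` are coalgebra homomorphisms with `p₁ ∘ α = p₁ ∘ β`, then
`p_n ∘ α = p_n ∘ β` for every `n ≥ 1`. -/
theorem stmt18
    [∀ X : M, PreservesFiniteLimits (tensorLeft X)]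
    [∀ X : M, PreservesFiniteLimits (tensorRight X)]
    (P : ℕ → M) (D : ∀ r s : ℕ, P (r + s) ⟶ P r ⊗ P s)
    (hmono : ∀ n : ℕ, 1 ≤ n → Mono (D 1 n))
    (ε0 : P 0 ⟶ 𝟙_ M)
    (ΔT : (∐ P) ⟶ (∐ P) ⊗ (∐ P)) (εT : (∐ P) ⟶ 𝟙_ M)
    (hcoassoc : ΔT ≫ (ΔT ▷ (∐ P)) ≫ (α_ _ _ _).hom = ΔT ≫ ((∐ P) ◁ ΔT))
    (hcol : ΔT ≫ (εT ▷ (∐ P)) = (λ_ (∐ P)).inv)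
    (hcor : ΔT ≫ ((∐ P) ◁ εT) = (ρ_ (∐ P)).inv)
    (hε : εT = πT P 0 ≫ ε0)
    (hΔ : ∀ t : ℕ, Sigma.ι P t ≫ ΔT =
      ∑ r ∈ Finset.range (t + 1),
        dron P D t r ≫ (Sigma.ι P r ⊗ₘ Sigma.ι P (t - r)))
    -- a coalgebra `E` and two coalgebra homomorphisms `α, β : E ⟶ T`
    (E : Comon M) (a b : E.X ⟶ ∐ P)
    (ha₁ : a ≫ ΔT = ComonObj.comul (X := E.X) ≫ (a ⊗ₘ a)) (ha₂ : a ≫ εT = ComonObj.counit (X := E.X))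
    (hb₁ : b ≫ ΔT = ComonObj.comul (X := E.X) ≫ (b ⊗ₘ b)) (hb₂ : b ≫ εT = ComonObj.counit (X := E.X))
    (h1 : a ≫ πT P 1 = b ≫ πT P 1) :
    ∀ n : ℕ, 1 ≤ n → a ≫ πT P n = b ≫ πT P n := by
  intro n hn
  induction n, hn using Nat.le_induction with
  | base => exact h1
  | succ n hn ih =>
    have : Mono (D 1 n) := hmono n hn
    rw [Nat.add_comm, ← cancel_mono (D 1 n), Category.assoc, Category.assoc,
      comp_πT_comp_deconcat_of_comp_comul P D ΔT hΔ _ a ha₁,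
      comp_πT_comp_deconcat_of_comp_comul P D ΔT hΔ _ b hb₁, h1, ih]
end
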